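/- Let R be a commutative ring, A ∈ R^{m×n}, A° ∈ R^{n×m}, and let a_j denote the coefficient of Z^j in det(I_m + Z·(A·A°)). If D_{k+1}(A) = 0 (all (k+1)×(k+1) minors of A vanish), then A · Adj^{(k)}_{A°}(A) · A = a_k · A, where Adj^{(k)}_{A°}(A) := a_{k−1}·A° − a_{k−2}·A°·A·A° + ⋯ + (−1)^{k−1}·(A°·A)^{k−1}·A°. -/

import Mathlib

/-!
Put `B = A * A'` and `N = 1 + X • B` over `R[X]`. Comparing coefficients in `N * adj N = det N`
shows that the coefficient of `X ^ k` in `adj N` is `a_k - B * T_k`, where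
`T_k = adjTrunc B k = Σ_{i<k} (-1)^i a_{k-1-i} B^i` and `Adj^{(k)}_{A'}(A) = A' * T_k`; so the
claim says exactly that this coefficient annihilates `A` from the right. By Cramer's rule the
`(p, q)` entry of `adj N * A` is the determinant of `N` with its column `p` replaced by column `q`
of `A`, and linearity in that column writes `X` times it as
`det (1 + X • A * W₁) - det (1 + X • A * W₀)` for suitable `W₀, W₁`. The coefficient of
`X ^ (k + 1)` in such a determinant is a sum of principal `(k+1)`-minors of `A * W`, which lie in
`D_{k+1}(A)` by the Cauchy–Binet expansion.
-/

open Matrix Polynomial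

/-- The `k`-th determinantal ideal of a matrix. -/
noncomputable def detIdeal {R : Type*} [CommRing R] {m n : ℕ} (k : ℕ)
    (A : Matrix (Fin m) (Fin n) R) : Ideal R :=
  Ideal.span {x | ∃ (α : Fin k → Fin m) (β : Fin k → Fin n),
    StrictMono α ∧ StrictMono β ∧ x = (A.submatrix α β).det}

/-- `aCoeff A A' j` is the coefficient of `Z^j` in `det(I_m + Z·(A·A'))`. -/
noncomputable def aCoeff {R : Type*} [CommRing R] {m n : ℕ}
    (A : Matrix (Fin m) (Fin n) R) (A' : Matrix (Fin n) (Fin m) R) (j : ℕ) : R :=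
  (((1 : Matrix (Fin m) (Fin m) R[X]) + (X : R[X]) • (A * A').map C).det).coeff j

/-- `Adj^{(k)}_{A'}(A) = Σ_{i=0}^{k−1} (−1)^i · a_{k−1−i} · (A'·A)^i · A'`. -/
noncomputable def adjK {R : Type*} [CommRing R] {m n : ℕ} (k : ℕ)
    (A : Matrix (Fin m) (Fin n) R) (A' : Matrix (Fin n) (Fin m) R) :
    Matrix (Fin n) (Fin m) R :=
  ∑ i ∈ Finset.range k, ((-1 : R) ^ i * aCoeff A A' (k - 1 - i)) • ((A' * A) ^ i * A')

theorem exists_strictMono_comp_perm {n r : ℕ} (f : Fin r → Fin n) (hf : Function.Injective f) :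
    ∃ (g : Fin r → Fin n) (σ : Equiv.Perm (Fin r)), StrictMono g ∧ f = g ∘ σ :=
  ⟨f ∘ Tuple.sort f, (Tuple.sort f)⁻¹,
    (Tuple.monotone_sort f).strictMono_of_injective (hf.comp (Tuple.sort f).injective),
    by ext; simp⟩

section Minors

variable {R : Type*} [CommRing R] {m n r : ℕ}

theorem det_submatrix_mem_detIdeal (A : Matrix (Fin m) (Fin n) R) (f : Fin r → Fin m)
    (g : Fin r → Fin n) : (A.submatrix f g).det ∈ detIdeal r A := by
  by_cases hf : Function.Injective f
  swap
  · obtain ⟨i, j, hij, hne⟩ := Function.not_injective_iff.mp hf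
    rw [det_zero_of_row_eq hne (by ext; simp [hij])]
    exact zero_mem _
  by_cases hg : Function.Injective g
  swap
  · obtain ⟨i, j, hij, hne⟩ := Function.not_injective_iff.mp hg
    rw [det_zero_of_column_eq hne (by simp [hij])]
    exact zero_mem _
  obtain ⟨f', σ, hf', rfl⟩ := exists_strictMono_comp_perm f hf
  obtain ⟨g', τ, hg', rfl⟩ := exists_strictMono_comp_perm g hg
  have hsorted : A.submatrix (f' ∘ σ) (g' ∘ τ)
      = ((A.submatrix f' g').submatrix σ id).submatrix id τ := rfl
  rw [hsorted, det_permute', det_permute]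
  exact Ideal.mul_mem_left _ _ <| Ideal.mul_mem_left _ _ <|
    Ideal.subset_span ⟨f', g', hf', hg', rfl⟩

theorem det_mul_eq_sum_prod_mul_det_submatrix {ι : Type*} [Fintype ι]
    (M : Matrix (Fin r) ι R) (N : Matrix ι (Fin r) R) :
    (M * N).det = ∑ p : Fin r → ι, (∏ i, M i (p i)) * (N.submatrix p id).det := by
  have hrows : M * N = fun i => ∑ c, M i c • N c := by
    ext i j
    simp [Matrix.mul_apply]
  change detRowAlternating (M * N) = _
  rw [hrows]
  exact (detRowAlternating.map_sum _).trans
    (Finset.sum_congr rfl fun p _ => detRowAlternating.map_smul_univ _ _)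

theorem det_submatrix_mul_mem_detIdeal {ι : Type*} [Fintype ι] (A : Matrix (Fin m) (Fin n) R)
    (W : Matrix (Fin n) ι R) (f : Fin r → Fin m) (g : Fin r → ι) :
    ((A * W).submatrix f g).det ∈ detIdeal r A := by
  rw [← det_transpose, ← submatrix_mul_equiv _ _ _ (Equiv.refl _), transpose_mul,
    det_mul_eq_sum_prod_mul_det_submatrix]
  refine Ideal.sum_mem _ fun p _ => Ideal.mul_mem_left _ _ ?_
  rw [← transpose_submatrix, det_transpose]
  exact det_submatrix_mem_detIdeal A f p

end Minors

theorem coeff_det_one_add_X_smul_mul_mem_detIdeal {R : Type*} [CommRing R] {m n : ℕ}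
    (A : Matrix (Fin m) (Fin n) R) (W : Matrix (Fin n) (Fin m) R) (r : ℕ) :
    (det (1 + (X : R[X]) • (A * W).map C)).coeff r ∈ detIdeal r A := by
  rw [coeff_det_one_add_X_smul_eq_sum_minors]
  refine Ideal.sum_mem _ fun s hs => ?_
  let e : Fin r ≃ s :=
    (Fintype.equivFinOfCardEq (by simpa using (Finset.mem_powersetCard.mp hs).2)).symm
  rw [← det_submatrix_equiv_self e, submatrix_submatrix]
  exact det_submatrix_mul_mem_detIdeal A W _ _

section OneAddXSmul

variable {R : Type*} [CommRing R] {ι : Type*} [Fintype ι] [DecidableEq ι]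

noncomputable def adjTrunc (B : Matrix ι ι R) (j : ℕ) : Matrix ι ι R :=
  ∑ i ∈ Finset.range j,
    ((-1 : R) ^ i * (det (1 + (X : R[X]) • B.map C)).coeff (j - 1 - i)) • B ^ i

theorem adjTrunc_succ (B : Matrix ι ι R) (j : ℕ) :
    adjTrunc B (j + 1) = (det (1 + (X : R[X]) • B.map C)).coeff j • 1 - B * adjTrunc B j := by
  rw [adjTrunc, adjTrunc, Finset.sum_range_succ', Finset.mul_sum, sub_eq_add_neg,
    ← Finset.sum_neg_distrib, add_comm]
  congr 1
  · simp
  · refine Finset.sum_congr rfl fun i _ => ?_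
    rw [mul_smul_comm, ← pow_succ', ← neg_smul, pow_succ, Nat.add_sub_cancel,
      show j - (i + 1) = j - 1 - i by omega]
    ring_nf

theorem matPolyEquiv_mul_adjugate (B : Matrix ι ι R) :
    (1 + X * C B) * matPolyEquiv (adjugate (1 + (X : R[X]) • B.map C))
      = (det (1 + (X : R[X]) • B.map C)).map (algebraMap R (Matrix ι ι R)) := by
  have h := congrArg matPolyEquiv (mul_adjugate (1 + (X : R[X]) • B.map C))
  simpa [matPolyEquiv_smul_one] using h

theorem coeff_matPolyEquiv_adjugate (B : Matrix ι ι R) (j : ℕ) :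
    (matPolyEquiv (adjugate (1 + (X : R[X]) • B.map C))).coeff j = adjTrunc B (j + 1) := by
  have hcoeff (l : ℕ) := congrArg (Polynomial.coeff · l) (matPolyEquiv_mul_adjugate B)
  simp only [add_mul, one_mul, mul_assoc, coeff_add, coeff_map,
    Algebra.algebraMap_eq_smul_one] at hcoeff
  induction j with
  | zero => simpa [adjTrunc_succ, adjTrunc] using hcoeff 0
  | succ j ih =>
    rw [adjTrunc_succ, ← ih, ← hcoeff (j + 1), coeff_X_mul, coeff_C_mul, add_sub_cancel_right]

theorem X_mul_det_updateCol_one_add_X_smul (B : Matrix ι ι R) (p : ι) (c : ι → R) :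
    X * det ((1 + (X : R[X]) • B.map C).updateCol p (fun i => C (c i)))
      = det (1 + (X : R[X]) • (B.updateCol p c).map C)
        - det (1 + (X : R[X]) • (B.updateCol p 0).map C) := by
  have hc : 1 + (X : R[X]) • (B.updateCol p c).map C
      = (1 + (X : R[X]) • B.map C).updateCol p
          (Pi.single p 1 + (X : R[X]) • fun i => C (c i)) := by
    ext i j
    by_cases hj : j = p <;> by_cases hi : i = p <;> simp [hi, hj, one_apply]
  have h0 : 1 + (X : R[X]) • (B.updateCol p 0).map C
      = (1 + (X : R[X]) • B.map C).updateCol p (Pi.single p (1 : R[X])) := by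
    ext i j
    by_cases hj : j = p <;> by_cases hi : i = p <;> simp [hi, hj, one_apply]
  rw [hc, h0, det_updateCol_add, det_updateCol_smul, add_sub_cancel_left]

end OneAddXSmul

theorem coeff_matPolyEquiv_adjugate_mul_eq_zero {R : Type*} [CommRing R] {m n k : ℕ}
    (A : Matrix (Fin m) (Fin n) R) (A' : Matrix (Fin n) (Fin m) R)
    (hA : detIdeal (k + 1) A = ⊥) :
    (matPolyEquiv (adjugate (1 + (X : R[X]) • (A * A').map C))).coeff k * A = 0 := by
  ext p q
  have hcol₁ : (A * A').updateCol p (A.col q) = A * A'.updateCol p (Pi.single q 1) := by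
    rw [mul_updateCol, mulVec_single_one]
  have hcol₀ : (A * A').updateCol p 0 = A * A'.updateCol p 0 := by
    rw [mul_updateCol, mulVec_zero]
  have hentry : ((matPolyEquiv (adjugate (1 + (X : R[X]) • (A * A').map C))).coeff k * A :
        Matrix (Fin m) (Fin n) R) p q
      = (X * det ((1 + (X : R[X]) • (A * A').map C).updateCol p (fun i => C (A.col q i)))).coeff
          (k + 1) := by
    rw [coeff_X_mul, ← cramer_apply, cramer_eq_adjugate_mulVec]
    simp [mul_apply, mulVec, dotProduct, matPolyEquiv_coeff_apply, finsetSum_coeff]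
  rw [hentry, X_mul_det_updateCol_one_add_X_smul, hcol₁, hcol₀, coeff_sub, Matrix.zero_apply,
    ← Ideal.mem_bot, ← hA]
  exact sub_mem (coeff_det_one_add_X_smul_mul_mem_detIdeal A _ _)
    (coeff_det_one_add_X_smul_mul_mem_detIdeal A _ _)

theorem pow_mul_mul_eq_mul_pow_mul {R : Type*} [Semiring R] {m n : Type*} [Fintype m]
    [Fintype n] [DecidableEq m] [DecidableEq n] (A : Matrix m n R) (A' : Matrix n m R) (i : ℕ) :
    (A' * A) ^ i * A' = A' * (A * A') ^ i := by
  induction i with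
  | zero => simp
  | succ i ih => rw [pow_succ', Matrix.mul_assoc, ih, pow_succ']; simp only [Matrix.mul_assoc]

theorem adjK_eq_mul_adjTrunc {R : Type*} [CommRing R] {m n : ℕ} (k : ℕ)
    (A : Matrix (Fin m) (Fin n) R) (A' : Matrix (Fin n) (Fin m) R) :
    adjK k A A' = A' * adjTrunc (A * A') k := by
  simp only [adjK, adjTrunc, aCoeff, Matrix.mul_sum, Matrix.mul_smul, pow_mul_mul_eq_mul_pow_mul]

theorem stmt13 {R : Type*} [CommRing R] {m n k : ℕ}
    (A : Matrix (Fin m) (Fin n) R) (A' : Matrix (Fin n) (Fin m) R)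
    (hA : detIdeal (k + 1) A = ⊥) :
    A * adjK k A A' * A = aCoeff A A' k • A := by
  have h := coeff_matPolyEquiv_adjugate_mul_eq_zero A A' hA
  rw [coeff_matPolyEquiv_adjugate, adjTrunc_succ, Matrix.sub_mul, sub_eq_zero, Matrix.smul_mul,
    Matrix.one_mul] at h
  rw [adjK_eq_mul_adjTrunc, aCoeff, h]
  simp only [Matrix.mul_assoc]
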